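/- Let G be a group and K a symmetric subset of G with 1 ∈ K that generates G, and suppose K·K can be covered by finitely many left translates of K, i.e. K·K ⊆ ⋃_{i=1}^m g_i·K for some g₁, …, g_m ∈ G. Then for every subset B of G contained in some power Kᵖ (p ≥ 1), the set G \ B has only finitely many K⁴-components; that is, there is a finite subset S of G \ B such that every element of G \ B is joined to some element of S by a K⁴-chain in G \ B. -/

import Mathlib

/-!
Write `x ∈ Bᶜ` as a word in `K`. As long as a prefix `y * k` lies outside `K ^ (p + 1)`, the
shorter prefix `y` is not in `B ⊆ K ^ p`, so stepping back along the word gives a `K`-chain in `Bᶜ`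
from `x` to a point of `K ^ (p + 1) \ B`. The covering hypothesis puts `K ^ (p + 1)` inside
finitely many translates `t • K`, and two points of one translate differ by an element of
`K⁻¹ * K = K ^ 2`; so one point from each translate meeting `K ^ (p + 1) \ B` suffices.
-/

open Set Pointwise

/-- One step of a `K`-chain inside the set `A`. -/
def KStep {G : Type*} [Group G] (K A : Set G) (x y : G) : Prop :=
  x ∈ A ∧ y ∈ A ∧ x⁻¹ * y ∈ K

/-- `x` and `y` are joined by a `K`-chain inside `A`. -/
def KConn {G : Type*} [Group G] (K A : Set G) (x y : G) : Prop :=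
  Relation.ReflTransGen (KStep K A) x y

section

variable {G : Type*} [Group G]

lemma KConn.mono {K K' A : Set G} (hK : K ⊆ K') {x y : G} (hxy : KConn K A x y) :
    KConn K' A x y :=
  Relation.ReflTransGen.mono (fun _ _ ⟨ha, hb, hab⟩ ↦ ⟨ha, hb, hK hab⟩) x y hxy

lemma exists_mem_pow_of_closure_eq_top {K : Set G} (hKsymm : K⁻¹ = K)
    (hKgen : Subgroup.closure K = ⊤) (x : G) : ∃ n, x ∈ K ^ n := by
  refine Subgroup.closure_induction (p := fun x _ ↦ ∃ n, x ∈ K ^ n)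
    (fun y hy ↦ ⟨1, by simpa using hy⟩) ⟨0, by simp⟩ ?_ ?_ (hKgen ▸ Subgroup.mem_top x)
  · rintro a b - - ⟨n, hn⟩ ⟨k, hk⟩
    exact ⟨n + k, pow_add K n k ▸ mul_mem_mul hn hk⟩
  · rintro a - ⟨n, hn⟩
    exact ⟨n, by simpa [← inv_pow, hKsymm] using inv_mem_inv.2 hn⟩

lemma exists_mem_pow_succ_kConn_of_mem_pow {K B : Set G} {p : ℕ} (hK1 : (1 : G) ∈ K)
    (hB : B ⊆ K ^ p) {n : ℕ} {x : G} (hx : x ∈ K ^ n) (hxB : x ∈ Bᶜ) :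
    ∃ s ∈ K ^ (p + 1) ∩ Bᶜ, KConn K Bᶜ s x := by
  induction n generalizing x with
  | zero =>
    obtain rfl : x = 1 := by simpa using hx
    exact ⟨1, ⟨one_mem_pow hK1, hxB⟩, .refl⟩
  | succ n ih =>
    by_cases hxp : x ∈ K ^ (p + 1)
    · exact ⟨x, ⟨hxp, hxB⟩, .refl⟩
    rw [pow_succ] at hx
    obtain ⟨y, hy, k, hk, rfl⟩ := hx
    have hyB : y ∈ Bᶜ := fun hyB ↦ hxp (pow_succ K p ▸ mul_mem_mul (hB hyB) hk)
    obtain ⟨s, hs, hsy⟩ := ih hy hyB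
    exact ⟨s, hs, hsy.tail ⟨hyB, hxB, by simpa using hk⟩⟩

lemma exists_finset_subset_forall_inv_mul_mem {C K : Set G} {T : Finset G}
    (hC : C ⊆ (T : Set G) * K) :
    ∃ S : Finset G, (S : Set G) ⊆ C ∧ ∀ c ∈ C, ∃ s ∈ S, s⁻¹ * c ∈ K⁻¹ * K := by
  classical
  let rep (t : G) : G := Classical.epsilon (· ∈ t • K ∩ C)
  refine ⟨(T.image rep).filter (· ∈ C), fun s hs ↦ (Finset.mem_filter.1 hs).2, fun c hc ↦ ?_⟩
  obtain ⟨t, ht, k, hk, rfl⟩ := hC hc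
  obtain ⟨⟨a, ha, hat⟩, hrep⟩ : rep t ∈ t • K ∩ C :=
    Classical.epsilon_spec ⟨t * k, ⟨k, hk, rfl⟩, hc⟩
  refine ⟨rep t, Finset.mem_filter.2 ⟨Finset.mem_image_of_mem rep ht, hrep⟩, ?_⟩
  rw [← hat]
  exact ⟨a⁻¹, inv_mem_inv.2 ha, k, hk, by simp [smul_eq_mul, mul_assoc]⟩

end

theorem bounded_geometry_finitely_many_K4_components_general {G : Type*} [Group G]
    (K : Set G) (hKsymm : K⁻¹ = K) (hK1 : (1 : G) ∈ K)
    (hKgen : Subgroup.closure K = ⊤)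
    (m : ℕ) (g : Fin m → G) (hcover : K * K ⊆ ⋃ i : Fin m, g i • K)
    (B : Set G) (p : ℕ) (hB : B ⊆ K ^ p) :
    ∃ S : Finset G, (S : Set G) ⊆ Bᶜ ∧
      ∀ x ∈ Bᶜ, ∃ s ∈ S, KConn (K ^ 4) Bᶜ s x := by
  classical
  have hsq : K ^ 2 ⊆ (Finset.univ.image g : Set G) * K := by
    rw [sq]
    intro x hx
    obtain ⟨i, k, hk, rfl⟩ := mem_iUnion.1 (hcover hx)
    exact mul_mem_mul (by simp) hk
  have hcov : K ^ (p + 1) ⊆ (((Finset.univ.image g) ^ p : Finset G) : Set G) * K := by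
    simpa using pow_subset_pow_mul_of_sq_subset_mul hsq p.succ_ne_zero
  obtain ⟨S, hSC, hS⟩ := exists_finset_subset_forall_inv_mul_mem (inter_subset_left.trans hcov)
  refine ⟨S, hSC.trans inter_subset_right, fun x hx ↦ ?_⟩
  obtain ⟨n, hxn⟩ := exists_mem_pow_of_closure_eq_top hKsymm hKgen x
  obtain ⟨s₀, hs₀, hs₀x⟩ := exists_mem_pow_succ_kConn_of_mem_pow hK1 hB hxn hx
  obtain ⟨s, hsS, hss₀⟩ := hS s₀ hs₀
  have hK2 : K⁻¹ * K ⊆ K ^ 4 := by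
    rw [hKsymm, ← sq]; exact pow_subset_pow_right hK1 (by norm_num)
  have hK : K ⊆ K ^ 4 := subset_pow hK1 (by norm_num)
  exact ⟨s, hsS, .head ⟨(hSC hsS).2, hs₀.2, hK2 hss₀⟩ (hs₀x.mono hK)⟩

theorem bounded_geometry_finitely_many_K4_components {G : Type*} [Group G]
    (K : Set G) (hKsymm : K⁻¹ = K) (hK1 : (1 : G) ∈ K)
    (hKgen : Subgroup.closure K = ⊤)
    (m : ℕ) (g : Fin m → G) (hcover : K * K ⊆ ⋃ i : Fin m, g i • K)
    (B : Set G) (p : ℕ) (hp : 1 ≤ p) (hB : B ⊆ K ^ p) :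
    ∃ S : Finset G, (S : Set G) ⊆ Bᶜ ∧
      ∀ x ∈ Bᶜ, ∃ s ∈ S, KConn (K ^ 4) Bᶜ s x :=
  bounded_geometry_finitely_many_K4_components_general K hKsymm hK1 hKgen m g hcover B p hB
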